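/- Let F be a finite set of functions from a finite type X to a finite type Z that is δ-almost universal: for all x ≠ x', Pr_{f uniform}[f(x)=f(x')] ≤ δ. Let P be a distribution on F with P(f) ≤ 2^(α-β)/|F| for all f (where |F| = 2^α and min-entropy of P is at least β). Then for any fixed distribution q on X and independent x, x' sampled from q, the collision probability satisfies Pr[f(x)=f(x')] ≤ ∑_x q(x)² + 2^(α-β)·δ, where f is sampled from P independently of x, x'. -/
import Mathlib


theorem collision_probability_bound
    (X Z F : Type*) [Fintype X] [Fintype Z] [DecidableEq Z] [Fintype F] (ev : F → X → Z)
    (α : ℕ) (β δ : ℝ) (hδ : 0 ≤ δ)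
    (hcard : Fintype.card F = 2 ^ α)
    (huniv : ∀ x x' : X, x ≠ x' →
      (1 / (Fintype.card F : ℝ)) * ∑ f, (if ev f x = ev f x' then (1 : ℝ) else 0) ≤ δ)
    (P : F → ℝ) (hP0 : ∀ f, 0 ≤ P f) (hP1 : ∑ f, P f = 1)
    (hPmin : ∀ f, P f ≤ (2 : ℝ) ^ ((α : ℝ) - β) / (Fintype.card F : ℝ))
    (q : X → ℝ) (hq0 : ∀ x, 0 ≤ q x) (hq1 : ∑ x, q x = 1) :
    ∑ x, ∑ x', ∑ f, q x * q x' * P f * (if ev f x = ev f x' then (1 : ℝ) else 0)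
      ≤ (∑ x, q x ^ 2) + (2 : ℝ) ^ ((α : ℝ) - β) * δ := by
  classical
  set C : ℝ := (2 : ℝ) ^ ((α : ℝ) - β) with hC
  have hF : (0:ℝ) < (Fintype.card F : ℝ) := by
    rw [hcard]; positivity
  have hC0 : (0:ℝ) ≤ C := by positivity
  have key : ∀ x x' : X, x ≠ x' →
      ∑ f, P f * (if ev f x = ev f x' then (1:ℝ) else 0) ≤ C * δ := by
    intro x x' hxx
    calc ∑ f, P f * (if ev f x = ev f x' then (1:ℝ) else 0)
        ≤ ∑ f, (C / (Fintype.card F : ℝ)) * (if ev f x = ev f x' then (1:ℝ) else 0) := by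
          apply Finset.sum_le_sum
          intro f _
          split
          · simpa using hPmin f
          · simp
      _ = C * ((1 / (Fintype.card F:ℝ)) *
            ∑ f, (if ev f x = ev f x' then (1:ℝ) else 0)) := by
          rw [← Finset.mul_sum]; ring
      _ ≤ C * δ := mul_le_mul_of_nonneg_left (huniv x x' hxx) hC0
  have hS1 : ∀ x x' : X, ∑ f, P f * (if ev f x = ev f x' then (1:ℝ) else 0) ≤ 1 := by
    intro x x'
    calc ∑ f, P f * (if ev f x = ev f x' then (1:ℝ) else 0)
        ≤ ∑ f, P f := by
          apply Finset.sum_le_sum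
          intro f _
          split
          · simp
          · simpa using hP0 f
      _ = 1 := hP1
  have hS0 : ∀ x x' : X, 0 ≤ ∑ f, P f * (if ev f x = ev f x' then (1:ℝ) else 0) := by
    intro x x'
    apply Finset.sum_nonneg
    intro f _
    split
    · simpa using hP0 f
    · simp
  calc ∑ x, ∑ x', ∑ f, q x * q x' * P f * (if ev f x = ev f x' then (1:ℝ) else 0)
      = ∑ x, ∑ x', q x * q x' * ∑ f, P f * (if ev f x = ev f x' then (1:ℝ) else 0) := by
        refine Finset.sum_congr rfl fun x _ => Finset.sum_congr rfl fun x' _ => ?_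
        rw [Finset.mul_sum]
        exact Finset.sum_congr rfl fun f _ => by ring
    _ ≤ ∑ x, ∑ x', ((if x = x' then q x * q x' else 0) + q x * q x' * (C * δ)) := by
        refine Finset.sum_le_sum fun x _ => Finset.sum_le_sum fun x' _ => ?_
        by_cases hxx : x = x'
        · subst hxx
          simp only [if_pos rfl]
          simp [hP1]
          nlinarith [mul_nonneg (hq0 x) (hq0 x), mul_nonneg hC0 hδ]
        · simp only [hxx, if_neg, not_false_iff, zero_add]
          exact mul_le_mul_of_nonneg_left (key x x' hxx)
            (mul_nonneg (hq0 x) (hq0 x'))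
    _ = (∑ x, q x ^ 2) + C * δ := by
        simp only [Finset.sum_add_distrib]
        congr 1
        · refine Finset.sum_congr rfl fun x _ => ?_
          rw [Finset.sum_ite_eq Finset.univ x (fun x' => q x * q x')]
          simp [sq]
        · have : ∑ x, ∑ x', q x * q x' * (C * δ)
              = (∑ x, q x) * (∑ x', q x') * (C * δ) := by
            rw [Finset.sum_mul_sum, Finset.sum_mul]
            refine Finset.sum_congr rfl fun x _ => ?_
            rw [Finset.sum_mul]
          rw [this, hq1]; ring
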